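/- For all t > 0, 8·log(1+t) < (6t³ + 12t² + 8t)/(t+1)². -/

import Mathlib

/-! Since `sinh (log u) = (u - u⁻¹) / 2` and `y < sinh y` for `y > 0`, we get
`log u < (u - u⁻¹) / 2` for `u > 1`. With `u = 1 + t` the right-hand side of the claim exceeds
`4 (u - u⁻¹)` by `2 t³ / (1 + t)² ≥ 0`. -/

open Real

theorem log_lt_sub_inv_div_two {u : ℝ} (hu : 1 < u) : log u < (u - u⁻¹) / 2 := by
  rw [← sinh_log (by linarith)]
  exact self_lt_sinh_iff.2 (log_pos hu)

theorem stmt_7 (t : ℝ) (ht : 0 < t) :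
    8 * Real.log (1 + t) < (6 * t^3 + 12 * t^2 + 8 * t) / (t + 1)^2 := by
  have hgap : (6 * t^3 + 12 * t^2 + 8 * t) / (t + 1)^2 - 4 * ((1 + t) - (1 + t)⁻¹)
      = 2 * t^3 / (1 + t)^2 := by
    field_simp
    ring
  calc 8 * log (1 + t) < 4 * ((1 + t) - (1 + t)⁻¹) := by
        linarith [log_lt_sub_inv_div_two (show 1 < 1 + t by linarith)]
    _ ≤ (6 * t^3 + 12 * t^2 + 8 * t) / (t + 1)^2 := by
        have : 0 ≤ 2 * t^3 / (1 + t)^2 := by positivity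
        linarith
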